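/- arXiv:1504.05616 — 3 statements merged into one kernel-verified Lean document; each statement's English description precedes it below -/
import Mathlib

section
/- Let ι be a nonempty finite type, let p : ι → ℝ × ℝ be a family of points in the plane, and let D, Δ ∈ ℝ. If there exists a point x in the convex hull of the range of p whose first coordinate satisfies x₁ ≤ D and whose second coordinate satisfies x₂ ≥ Δ, then there exist indices i, j ∈ ι and a real number α with 0 ≤ α ≤ 1 such that the point α • p i + (1 − α) • p j has first coordinate ≤ D and second coordinate ≥ Δ. -/
/-!
Translate the corner `(D, Δ)` to the origin, so that the quadrant becomes `Q = (-∞, 0] × [0, ∞)`,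
and write the given point as `x = ∑ wᵢ uᵢ` with positive weights. If no `uᵢ` lies in `Q`, every
`uᵢ` with `uᵢ.1 ≤ 0` (the set `L`) has `uᵢ.2 < 0`, and for `uⱼ.1 > 0` (the set `R`) the segment
`[uᵢ, uⱼ]` meets `Q` as soon as the cross product `uᵢ × uⱼ` is `≤ 0`: it then crosses the vertical
axis at a nonnegative height. By bilinearity `∑_{L × R} wᵢ wⱼ (uᵢ × uⱼ) = a × b`, where `a` and `b`
are the partial sums over `L` and `R`, and `a ≤ 0`, `a + b = x ∈ Q` force `a × b ≤ 0`. Hence some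
pair in `L × R` has a nonpositive cross product.
-/

open Set

def cross (u v : ℝ × ℝ) : ℝ := u.1 * v.2 - u.2 * v.1

lemma cross_sum_smul_sum_smul {ι κ : Type*} (s : Finset ι) (t : Finset κ) (a : ι → ℝ)
    (b : κ → ℝ) (u : ι → ℝ × ℝ) (v : κ → ℝ × ℝ) :
    cross (∑ i ∈ s, a i • u i) (∑ j ∈ t, b j • v j) =
      ∑ ij ∈ s ×ˢ t, a ij.1 * b ij.2 * cross (u ij.1) (v ij.2) := by
  simp only [cross, Prod.fst_sum, Prod.snd_sum, Prod.smul_fst, Prod.smul_snd, smul_eq_mul,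
    Finset.sum_mul_sum, Finset.sum_product, ← Finset.sum_sub_distrib]
  congr! 2
  ring

lemma exists_convexComb_mem_quadrant_of_cross_nonpos {u v : ℝ × ℝ} (hu : u.1 ≤ 0)
    (hv : 0 < v.1) (huv : cross u v ≤ 0) :
    ∃ α ∈ Icc (0 : ℝ) 1, α • u + (1 - α) • v ∈ Iic 0 ×ˢ Ici 0 := by
  have hpos : 0 < v.1 - u.1 := by linarith
  set α := v.1 / (v.1 - u.1) with hα
  refine ⟨α, ⟨by positivity, (div_le_one hpos).2 (by linarith)⟩, ?_, ?_⟩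
  · rw [mem_Iic]
    refine le_of_eq ?_
    simp only [Prod.fst_add, Prod.smul_fst, smul_eq_mul, hα]
    field_simp
    ring
  · have hsnd : (α • u + (1 - α) • v).2 = -cross u v / (v.1 - u.1) := by
      simp only [cross, Prod.snd_add, Prod.smul_snd, smul_eq_mul, hα]
      field_simp
      ring
    rw [mem_Ici, hsnd]
    exact div_nonneg (by linarith) hpos.le

lemma cross_nonpos_of_add_mem_quadrant {a b : ℝ × ℝ} (ha : a ≤ 0)
    (hab : a + b ∈ Iic 0 ×ˢ Ici 0) : cross a b ≤ 0 := by
  obtain ⟨ha₁, ha₂⟩ := ha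
  obtain ⟨h₁, h₂⟩ := hab
  simp only [mem_Iic, mem_Ici, Prod.fst_add, Prod.snd_add] at h₁ h₂
  unfold cross
  nlinarith [mul_nonpos_of_nonpos_of_nonneg ha₁ h₂, mul_nonneg_of_nonpos_of_nonpos ha₂ h₁]

theorem exists_convexComb_mem_quadrant_of_sum_smul {ι : Type*} {s : Finset ι}
    (hs : s.Nonempty) {w : ι → ℝ} (hw : ∀ i ∈ s, 0 < w i) {u : ι → ℝ × ℝ}
    (hx : ∑ i ∈ s, w i • u i ∈ Iic 0 ×ˢ Ici 0) :
    ∃ i j, ∃ α ∈ Icc (0 : ℝ) 1, α • u i + (1 - α) • u j ∈ Iic 0 ×ˢ Ici 0 := by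
  classical
  by_cases hQ : ∃ i, u i ∈ Iic 0 ×ˢ Ici 0
  · obtain ⟨i, hi⟩ := hQ
    exact ⟨i, i, 1, by simp, by simpa using hi⟩
  have hneg : ∀ i, (u i).1 ≤ 0 → (u i).2 < 0 := fun i h₁ =>
    lt_of_not_ge fun h₂ => hQ ⟨i, h₁, h₂⟩
  set L := s.filter fun i => (u i).1 ≤ 0
  set R := s.filter fun i => ¬(u i).1 ≤ 0
  have hLR : (L ×ˢ R).Nonempty := by
    obtain ⟨i, hi, hiL⟩ : ∃ i ∈ s, w i * (u i).1 ≤ 0 := by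
      simpa using Finset.exists_le_of_sum_le hs (g := fun _ => 0)
        (by simpa [Prod.fst_sum] using hx.1)
    obtain ⟨j, hj, hjR⟩ : ∃ j ∈ s, 0 ≤ w j * (u j).2 := by
      simpa using Finset.exists_le_of_sum_le hs (f := fun _ => 0)
        (by simpa [Prod.snd_sum] using hx.2)
    refine ⟨(i, j), Finset.mem_product.2 ⟨Finset.mem_filter.2 ⟨hi, ?_⟩,
      Finset.mem_filter.2 ⟨hj, ?_⟩⟩⟩
    · exact nonpos_of_mul_nonpos_right hiL (hw i hi)
    · exact fun h => (hneg j h).not_ge (nonneg_of_mul_nonneg_right hjR (hw j hj))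
  have hcross : ∑ ij ∈ L ×ˢ R, w ij.1 * w ij.2 * cross (u ij.1) (u ij.2) ≤
      ∑ ij ∈ L ×ˢ R, 0 := by
    rw [← cross_sum_smul_sum_smul, Finset.sum_const_zero]
    refine cross_nonpos_of_add_mem_quadrant (Finset.sum_nonpos fun i hi => ?_) ?_
    · obtain ⟨his, hiL⟩ := Finset.mem_filter.1 hi
      exact smul_nonpos_of_nonneg_of_nonpos (hw i his).le ⟨hiL, (hneg i hiL).le⟩
    · rwa [Finset.sum_filter_add_sum_filter_not]
  obtain ⟨⟨i, j⟩, hij, hle⟩ := Finset.exists_le_of_sum_le hLR hcross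
  obtain ⟨⟨his, hiL⟩, ⟨hjs, hjR⟩⟩ :=
    And.imp Finset.mem_filter.1 Finset.mem_filter.1 (Finset.mem_product.1 hij)
  exact ⟨i, j, exists_convexComb_mem_quadrant_of_cross_nonpos hiL (lt_of_not_ge hjR)
    (nonpos_of_mul_nonpos_right hle (mul_pos (hw i his) (hw j hjs)))⟩

lemma sub_mem_quadrant_iff {y : ℝ × ℝ} {a b : ℝ} :
    y - (a, b) ∈ Iic 0 ×ˢ Ici 0 ↔ y ∈ Iic a ×ˢ Ici b := by
  simp [sub_nonneg]

theorem exists_convexComb_mem_Iic_prod_Ici_of_mem_convexHull {ι : Type*} (p : ι → ℝ × ℝ)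
    {a b : ℝ} {x : ℝ × ℝ} (hx : x ∈ convexHull ℝ (range p)) (hxQ : x ∈ Iic a ×ˢ Ici b) :
    ∃ i j, ∃ α ∈ Icc (0 : ℝ) 1, α • p i + (1 - α) • p j ∈ Iic a ×ˢ Ici b := by
  classical
  rw [convexHull_range_eq_exists_affineCombination] at hx
  obtain ⟨s, w, hw₀, hw₁, rfl⟩ := hx
  rw [Finset.affineCombination_eq_linear_combination _ _ _ hw₁] at hxQ
  set t := s.filter fun i => 0 < w i
  have ht : t.Nonempty := by
    refine Finset.nonempty_of_sum_ne_zero (f := w) ?_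
    rw [Finset.sum_filter_of_ne fun i hi hne => (hw₀ i hi).lt_of_ne' hne, hw₁]
    exact one_ne_zero
  have hsum : ∑ i ∈ t, w i • (p i - (a, b)) = ∑ i ∈ s, w i • p i - (a, b) := by
    rw [Finset.sum_filter_of_ne fun i hi hne => (hw₀ i hi).lt_of_ne' (left_ne_zero_of_smul hne)]
    simp only [smul_sub, Finset.sum_sub_distrib, ← Finset.sum_smul, hw₁, one_smul]
  obtain ⟨i, j, α, hα, hmem⟩ := exists_convexComb_mem_quadrant_of_sum_smul ht
    (fun i hi => (Finset.mem_filter.1 hi).2) (by rwa [hsum, sub_mem_quadrant_iff])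
  refine ⟨i, j, α, hα, sub_mem_quadrant_iff.1 ?_⟩
  convert hmem using 1
  module

theorem stmt_0_general {ι : Type*} (p : ι → ℝ × ℝ) (D Δ : ℝ)
    (h : ∃ x ∈ convexHull ℝ (Set.range p), x.1 ≤ D ∧ x.2 ≥ Δ) :
    ∃ (i j : ι) (α : ℝ), 0 ≤ α ∧ α ≤ 1 ∧
      (α • p i + (1 - α) • p j).1 ≤ D ∧ (α • p i + (1 - α) • p j).2 ≥ Δ := by
  obtain ⟨x, hx, hxD, hxΔ⟩ := h
  obtain ⟨i, j, α, ⟨hα₀, hα₁⟩, hD, hΔ⟩ :=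
    exists_convexComb_mem_Iic_prod_Ici_of_mem_convexHull p hx ⟨hxD, hxΔ⟩
  exact ⟨i, j, α, hα₀, hα₁, hD, hΔ⟩

theorem stmt_0 {ι : Type*} [Fintype ι] [Nonempty ι] (p : ι → ℝ × ℝ) (D Δ : ℝ)
    (h : ∃ x ∈ convexHull ℝ (Set.range p), x.1 ≤ D ∧ x.2 ≥ Δ) :
    ∃ (i j : ι) (α : ℝ), 0 ≤ α ∧ α ≤ 1 ∧
      (α • p i + (1 - α) • p j).1 ≤ D ∧ (α • p i + (1 - α) • p j).2 ≥ Δ :=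
  stmt_0_general p D Δ h
end

section
/- Let U be a finite type, n : ℕ, and let μ be a pmf on the type of sequences Fin n → U. Let D ⊆ Fin n be a set of indices and, for each i ∈ D, let f_i be a function assigning to each length-i prefix (an element of Fin i → U) a symbol in U. For each sequence u define the decoded sequence û(u) recursively by: û(u)_i = u_i if i ∉ D, and û(u)_i = f_i applied to the prefix (û(u)_0, …, û(u)_{i−1}) if i ∈ D. Then the probability of a decoding error satisfies μ{u : û(u) ≠ u} ≤ ∑_{i ∈ D} μ{u : f_i(u_0, …, u_{i−1}) ≠ u_i}. -/
/-- The successively decoded sequence: coordinates outside `D` are copied from `u`,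
coordinates in `D` are computed by the decision functions `f` from the previously
decoded prefix. -/
def decode {U : Type*} {n : ℕ} (D : Finset (Fin n))
    (f : (i : Fin n) → (Fin i.val → U) → U) (u : Fin n → U) : Fin n → U
  | i =>
    if i ∈ D then
      f i (fun j : Fin i.val => decode D f u (Fin.castLT j (j.isLt.trans i.isLt)))
    else u i
  termination_by i => i.val

/-! At the first index where the decoded sequence differs from `u`, every earlier symbol was
decoded correctly, so that index lies in `D` and its decision function, fed the true prefix of
`u`, erred. Hence the error event lies in the union of the events `f i (u_0, …, u_{i-1}) ≠ u i`,
`i ∈ D`, and the union bound concludes. -/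

namespace Finset

theorem sum_filter_le_sum_sum_filter {α ι β : Type*} [AddCommMonoid β] [PartialOrder β]
    [IsOrderedAddMonoid β] {f : α → β} (hf : ∀ a, 0 ≤ f a) {s : Finset α} {t : Finset ι}
    {p : α → Prop} [DecidablePred p] {q : ι → α → Prop} [∀ i, DecidablePred (q i)]
    (h : ∀ a ∈ s, p a → ∃ i ∈ t, q i a) :
    ∑ a ∈ s with p a, f a ≤ ∑ i ∈ t, ∑ a ∈ s with q i a, f a := by
  simp_rw [sum_filter]
  rw [sum_comm]
  refine sum_le_sum fun a ha => ?_
  have hnonneg : ∀ i ∈ t, 0 ≤ if q i a then f a else 0 := fun i _ => by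
    split_ifs
    exacts [hf a, le_rfl]
  split_ifs with hpa
  · obtain ⟨i, hi, hqi⟩ := h a ha hpa
    calc f a = if q i a then f a else 0 := (if_pos hqi).symm
      _ ≤ _ := single_le_sum hnonneg hi
  · exact sum_nonneg hnonneg

end Finset

section decode

variable {U : Type*} {n : ℕ} {D : Finset (Fin n)} {f : (i : Fin n) → (Fin i.val → U) → U}
  {u : Fin n → U} {i : Fin n}

theorem decode_of_mem (hi : i ∈ D) :
    decode D f u i =
      f i (fun j : Fin i.val => decode D f u (Fin.castLT j (j.isLt.trans i.isLt))) := by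
  rw [decode, if_pos hi]

theorem decode_of_notMem (hi : i ∉ D) : decode D f u i = u i := by
  rw [decode, if_neg hi]

theorem decode_eq_self_of_forall_mem
    (h : ∀ i ∈ D, f i (fun j : Fin i.val => u (Fin.castLT j (j.isLt.trans i.isLt))) = u i) :
    decode D f u = u := by
  funext i
  induction i using WellFoundedLT.induction with
  | _ i ih =>
    by_cases hi : i ∈ D
    · rw [decode_of_mem hi, ← h i hi]
      congr 1
      funext j
      exact ih _ j.isLt
    · exact decode_of_notMem hi

end decode

theorem stmt_2_general {U : Type*} [Fintype U] [DecidableEq U] {n : ℕ} (μ : (Fin n → U) → ℝ)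
    (hμ0 : ∀ u, 0 ≤ μ u)
    (D : Finset (Fin n)) (f : (i : Fin n) → (Fin i.val → U) → U) :
    ∑ u ∈ Finset.univ.filter (fun u : Fin n → U => decode D f u ≠ u), μ u ≤
      ∑ i ∈ D, ∑ u ∈ Finset.univ.filter
        (fun u : Fin n → U =>
          f i (fun j : Fin i.val => u (Fin.castLT j (j.isLt.trans i.isLt))) ≠ u i), μ u := by
  refine Finset.sum_filter_le_sum_sum_filter hμ0 fun u _ hu => ?_
  by_contra! hcorrect
  exact hu (decode_eq_self_of_forall_mem hcorrect)

theorem stmt_2 {U : Type*} [Fintype U] [DecidableEq U] {n : ℕ} (μ : (Fin n → U) → ℝ)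
    (hμ0 : ∀ u, 0 ≤ μ u) (hμ1 : ∑ u, μ u = 1)
    (D : Finset (Fin n)) (f : (i : Fin n) → (Fin i.val → U) → U) :
    ∑ u ∈ Finset.univ.filter (fun u : Fin n → U => decode D f u ≠ u), μ u ≤
      ∑ i ∈ D, ∑ u ∈ Finset.univ.filter
        (fun u : Fin n → U =>
          f i (fun j : Fin i.val => u (Fin.castLT j (j.isLt.trans i.isLt))) ≠ u i), μ u :=
  stmt_2_general μ hμ0 D f
end

section
/- Let A and B be finite types and let P be a pmf on A × B. Let f : B → A be a maximum-likelihood decision rule, i.e. assume P(a, b) ≤ P(f b, b) for all a ∈ A and b ∈ B. Then the error probability of f is bounded by the sum of pairwise Bhattacharyya coefficients: ∑_{(a,b) : a ≠ f b} P(a, b) ≤ ∑_{(a, a') : a ≠ a'} ∑_{b} √(P(a, b) · P(a', b)), where the outer sum on the right ranges over ordered pairs of distinct elements of A. -/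
theorem stmt_3 {A B : Type*} [Fintype A] [Fintype B] [DecidableEq A]
    (P : A × B → ℝ) (hP0 : ∀ x, 0 ≤ P x) (hP1 : ∑ x, P x = 1)
    (f : B → A) (hml : ∀ a b, P (a, b) ≤ P (f b, b)) :
    ∑ x ∈ Finset.univ.filter (fun x : A × B => x.1 ≠ f x.2), P x ≤
      ∑ q ∈ Finset.univ.filter (fun q : A × A => q.1 ≠ q.2),
        ∑ b, Real.sqrt (P (q.1, b) * P (q.2, b)) := by
  rw [Finset.sum_filter, Finset.sum_filter, Fintype.sum_prod_type, Fintype.sum_prod_type]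
  have hR : ∀ a : A, ∑ a' : A, (if a ≠ a' then ∑ b, Real.sqrt (P (a, b) * P (a', b)) else 0)
      = ∑ b : B, ∑ a' : A, (if a ≠ a' then Real.sqrt (P (a, b) * P (a', b)) else 0) := by
    intro a
    rw [Finset.sum_comm]
    refine Finset.sum_congr rfl fun a' _ => ?_
    split <;> simp
  refine Finset.sum_le_sum fun a _ => ?_
  rw [hR]
  refine Finset.sum_le_sum fun b _ => ?_
  by_cases h : a = f b
  · simp only [h, ne_eq, not_true_eq_false, if_false]
    exact Finset.sum_nonneg fun a' _ => by positivity
  · simp only [ne_eq, h, not_false_eq_true, if_true]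
    have hle : P (a, b) ≤ (if a ≠ f b then Real.sqrt (P (a, b) * P (f b, b)) else 0) := by
      simp only [ne_eq, h, not_false_eq_true, if_true]
      calc P (a, b) = Real.sqrt (P (a, b) * P (a, b)) := by
            exact (Real.sqrt_mul_self (hP0 _)).symm
        _ ≤ Real.sqrt (P (a, b) * P (f b, b)) := by
            apply Real.sqrt_le_sqrt
            exact mul_le_mul_of_nonneg_left (hml a b) (hP0 _)
    exact hle.trans (Finset.single_le_sum (f := fun a' => if a ≠ a' then Real.sqrt (P (a, b) * P (a', b)) else 0) (fun a' _ => by positivity) (Finset.mem_univ (f b)))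
end
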